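/- arXiv:1401.1183 — 3 statements merged into one kernel-verified Lean document; each statement's English description precedes it below -/
import Mathlib

section
/- Let A be a symmetric m-th order tensor and B a symmetric positive definite m-th order tensor with m even. Define f(x) = (A x^m / B x^m) ‖x‖^m. A pair (λ, x) with ‖x‖ = 1 satisfies A x^{m-1} = λ B x^{m-1} if and only if x is a KKT point of the problem of maximizing f over the unit sphere with Lagrange multiplier λ (for the constraint ‖x‖^m = 1), i.e., ∇f(x) − λ m x = 0 with λ = A x^m / B x^m. -/
open scoped BigOperators

/-- Contraction of an `(m+1)`-th order, `n`-dimensional tensor with `m` copies of `x`,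
yielding the vector `A x^m` (i.e. `A x^{order-1}`). -/
noncomputable def tvec {m n : ℕ} (A : (Fin (m + 1) → Fin n) → ℝ) (x : Fin n → ℝ) :
    Fin n → ℝ :=
  fun i => ∑ j : Fin m → Fin n, A (Fin.cons i j) * ∏ k, x (j k)

/-- Full contraction of an `m`-th order, `n`-dimensional tensor with `m` copies of `x`. -/
noncomputable def tscal {m n : ℕ} (A : (Fin m → Fin n) → ℝ) (x : Fin n → ℝ) : ℝ :=
  ∑ j : Fin m → Fin n, A j * ∏ k, x (j k)

/-- A tensor is symmetric if invariant under index permutations. -/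
def IsSymmT {m n : ℕ} (A : (Fin m → Fin n) → ℝ) : Prop :=
  ∀ (σ : Equiv.Perm (Fin m)) (i : Fin m → Fin n), A (i ∘ σ) = A i

/-- Euclidean norm on `Fin n → ℝ`. -/
noncomputable def vnorm {n : ℕ} (x : Fin n → ℝ) : ℝ :=
  Real.sqrt (∑ i, x i ^ 2)

/-!
For symmetric `A` every factor of `A y^{m+1}` contributes the same directional derivative, so the
gradient of `y ↦ A y^{m+1}` is `(m+1) A y^m`, and on the unit sphere that of `‖y‖^{m+1}` is
`(m+1) y`. With `μ = A x^{m+1} / B x^{m+1}` this gives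
`∇f(x) = (m+1) / B x^{m+1} · (A x^{m+1} x + A x^m − μ B x^m)`.
If `A x^m = λ B x^m`, pairing with `x` gives `λ = μ` and the last two terms cancel. Conversely,
when `λ = μ` the KKT equation says that `A x^m − μ B x^m` is orthogonal to every vector.
-/

open Finset

noncomputable def dotCLM {n : ℕ} (w : Fin n → ℝ) : (Fin n → ℝ) →L[ℝ] ℝ :=
  LinearMap.toContinuousLinearMap (dotProductBilin ℝ ℝ w)

@[simp]
lemma dotCLM_apply {n : ℕ} (w v : Fin n → ℝ) : dotCLM w v = w ⬝ᵥ v := rfl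

lemma tscal_eq_dotProduct_tvec {m n : ℕ} (A : (Fin (m + 1) → Fin n) → ℝ) (x : Fin n → ℝ) :
    tscal A x = x ⬝ᵥ tvec A x := by
  rw [tscal, ← (Fin.consEquiv fun _ => Fin n).sum_comp, Fintype.sum_prod_type]
  simp only [dotProduct, tvec, mul_sum, Fin.consEquiv_apply, Fin.prod_univ_succ, Fin.cons_zero,
    Fin.cons_succ]
  exact sum_congr rfl fun i _ => sum_congr rfl fun j _ => by
    rw [mul_left_comm]; rfl

lemma prod_univ_erase_zero {M : Type*} [CommMonoid M] {m : ℕ} (f : Fin (m + 1) → M) :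
    ∏ l ∈ univ.erase 0, f l = ∏ l : Fin m, f l.succ := by
  rw [Fin.univ_succ, erase_cons, prod_map]
  rfl

lemma prod_univ_erase_perm {M ι : Type*} [CommMonoid M] [Fintype ι] [DecidableEq ι]
    (σ : Equiv.Perm ι) (f : ι → M) (k : ι) :
    ∏ l ∈ univ.erase (σ k), f l = ∏ l ∈ univ.erase k, f (σ l) := by
  have : (univ.erase k).map σ.toEmbedding = univ.erase (σ k) := by
    rw [map_erase, map_univ_equiv]; rfl
  rw [← this, prod_map]
  rfl

lemma sum_mul_prod_erase_zero_mul {m n : ℕ} (A : (Fin (m + 1) → Fin n) → ℝ) (x v : Fin n → ℝ) :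
    ∑ j, A j * ((∏ l ∈ univ.erase 0, x (j l)) * v (j 0)) = tvec A x ⬝ᵥ v := by
  rw [← (Fin.consEquiv fun _ => Fin n).sum_comp, Fintype.sum_prod_type]
  simp only [dotProduct, tvec, sum_mul, prod_univ_erase_zero]
  exact sum_congr rfl fun i _ => sum_congr rfl fun j _ => by
    rw [← mul_assoc]; rfl

lemma IsSymmT.sum_mul_prod_erase_mul {m n : ℕ} {A : (Fin (m + 1) → Fin n) → ℝ} (hA : IsSymmT A)
    (x v : Fin n → ℝ) (k : Fin (m + 1)) :
    ∑ j, A j * ((∏ l ∈ univ.erase k, x (j l)) * v (j k)) = tvec A x ⬝ᵥ v := by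
  set σ := Equiv.swap 0 k
  rw [← sum_mul_prod_erase_zero_mul, ← (σ.arrowCongr (Equiv.refl (Fin n))).symm.sum_comp]
  refine sum_congr rfl fun j _ => ?_
  have hσk : σ k = 0 := Equiv.swap_apply_right 0 k
  change A (j ∘ σ) * ((∏ l ∈ univ.erase k, x (j (σ l))) * v (j (σ k))) = _
  rw [hA, ← prod_univ_erase_perm σ (fun l => x (j l)), hσk]

lemma IsSymmT.hasFDerivAt_tscal {m n : ℕ} {A : (Fin (m + 1) → Fin n) → ℝ} (hA : IsSymmT A)
    (x : Fin n → ℝ) : HasFDerivAt (tscal A) ((m + 1 : ℝ) • dotCLM (tvec A x)) x := by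
  refine (HasFDerivAt.fun_sum fun j _ => (HasFDerivAt.finsetProd fun k _ =>
    hasFDerivAt_apply (j k) x).const_mul (A j)).congr_fderiv ?_
  ext v
  simp only [_root_.sum_apply, smul_apply, ContinuousLinearMap.proj_apply, smul_eq_mul, mul_sum,
    dotCLM_apply]
  rw [sum_comm]
  simp only [hA.sum_mul_prod_erase_mul, sum_const, card_univ, Fintype.card_fin, nsmul_eq_mul]
  push_cast
  ring

lemma hasFDerivAt_vnorm_pow {n p : ℕ} (hp : Even p) (x : Fin n → ℝ) :
    HasFDerivAt (fun y => vnorm y ^ p) ((p * vnorm x ^ (p - 2) : ℝ) • dotCLM x) x := by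
  obtain ⟨k, rfl⟩ := hp
  have hpow : ∀ y : Fin n → ℝ, ∀ i, vnorm y ^ (2 * i) = (∑ j, y j ^ 2) ^ i := fun y i => by
    rw [pow_mul, vnorm, Real.sq_sqrt (by positivity)]
  rw [← two_mul, show 2 * k - 2 = 2 * (k - 1) by omega]
  simp_rw [hpow]
  refine ((HasFDerivAt.fun_sum fun i _ => (hasFDerivAt_apply i x).pow 2).pow k).congr_fderiv ?_
  ext v
  simp only [nsmul_eq_mul, Nat.add_one_sub_one, pow_one, smul_apply, _root_.sum_apply,
    ContinuousLinearMap.proj_apply, smul_eq_mul, mul_sum, dotCLM_apply, dotProduct]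
  push_cast
  exact sum_congr rfl fun i _ => by ring

lemma fderiv_tscal_div_tscal_mul_vnorm_pow_apply {m n : ℕ} {A B : (Fin (m + 1) → Fin n) → ℝ}
    (hA : IsSymmT A) (hB : IsSymmT B) (hm : Even (m + 1)) {x : Fin n → ℝ} (hx : vnorm x = 1)
    (hb : tscal B x ≠ 0) (v : Fin n → ℝ) :
    fderiv ℝ (fun y => tscal A y / tscal B y * vnorm y ^ (m + 1)) x v =
      (m + 1) / tscal B x *
        ((tscal A x • x + tvec A x - (tscal A x / tscal B x) • tvec B x) ⬝ᵥ v) := by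
  have hf := ((hA.hasFDerivAt_tscal x).fun_mul ((hasDerivAt_inv hb).comp_hasFDerivAt x
    (hB.hasFDerivAt_tscal x))).fun_mul (hasFDerivAt_vnorm_pow hm x)
  simp_rw [div_eq_mul_inv]
  refine (congrArg (· v) hf.fderiv).trans ?_
  simp only [Function.comp_apply, Nat.cast_add, Nat.cast_one, hx, Nat.reduceSubDiff, one_pow,
    mul_one, neg_smul, smul_neg, smul_add, one_smul, add_apply, smul_apply, dotCLM_apply,
    smul_eq_mul, neg_apply, sub_dotProduct, add_dotProduct, smul_dotProduct]
  field_simp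
  ring

lemma eq_smul_iff_forall_dotProduct_eq {n : ℕ} {g h x : Fin n → ℝ} {c lam : ℝ} (hc : c ≠ 0)
    (hb : x ⬝ᵥ h ≠ 0) :
    g = lam • h ↔
      (∀ v, c / (x ⬝ᵥ h) * (((x ⬝ᵥ g) • x + g - ((x ⬝ᵥ g) / (x ⬝ᵥ h)) • h) ⬝ᵥ v) =
          lam * c * (x ⬝ᵥ v)) ∧ lam = (x ⬝ᵥ g) / (x ⬝ᵥ h) := by
  simp only [add_dotProduct, sub_dotProduct, smul_dotProduct, smul_eq_mul]
  constructor
  · rintro rfl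
    simp only [dotProduct_smul, smul_dotProduct, smul_eq_mul, mul_div_cancel_right₀ _ hb]
    refine ⟨fun v => ?_, trivial⟩
    field_simp
    ring
  · rintro ⟨hgrad, rfl⟩
    set μ := (x ⬝ᵥ g) / (x ⬝ᵥ h)
    have hμ : μ * (x ⬝ᵥ h) = x ⬝ᵥ g := div_mul_cancel₀ _ hb
    have hres : ∀ v, (g - μ • h) ⬝ᵥ v = 0 := fun v => by
      have := hgrad v
      rw [sub_dotProduct, smul_dotProduct, smul_eq_mul]
      field_simp at this
      linear_combination this + (x ⬝ᵥ v) * hμ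
    exact sub_eq_zero.mp (dotProduct_self_eq_zero.mp (hres _))

/-- with `f(x) = (A x^m / B x^m) ‖x‖^m` (order `m+1`), a pair `(λ, x)` with
`‖x‖ = 1` satisfies `A x^{m} = λ B x^{m}` iff `x` is a KKT point of maximizing `f` over the
unit sphere with multiplier `λ`, i.e. `∇f(x) = λ (m+1) x` and `λ = A x^{m+1} / B x^{m+1}`. -/
theorem stmt_7 {m n : ℕ} (hmeven : Even (m + 1))
    (A B : (Fin (m + 1) → Fin n) → ℝ) (hA : IsSymmT A) (hB : IsSymmT B)
    (hBpos : ∀ y : Fin n → ℝ, y ≠ 0 → 0 < tscal B y)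
    (lam : ℝ) (x : Fin n → ℝ) (hx : vnorm x = 1) :
    tvec A x = lam • tvec B x ↔
      ((∀ v : Fin n → ℝ,
          fderiv ℝ (fun y : Fin n → ℝ => tscal A y / tscal B y * vnorm y ^ (m + 1)) x v =
            lam * (m + 1 : ℝ) * ∑ i, x i * v i) ∧
        lam = tscal A x / tscal B x) := by
  have hx0 : x ≠ 0 := by
    rintro rfl
    simp [vnorm] at hx
  have hb : tscal B x ≠ 0 := (hBpos x hx0).ne'
  simp_rw [fderiv_tscal_div_tscal_mul_vnorm_pow_apply hA hB hmeven hx hb]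
  simp only [tscal_eq_dotProduct_tvec] at hb ⊢
  exact eq_smul_iff_forall_dotProduct_eq (by positivity) hb
end

section
/- Let f be continuously differentiable and convex on an open neighborhood Ω of a point w on the unit sphere, with ∇f(w) ≠ 0. Define v = ∇f(w)/‖∇f(w)‖. If v ∈ Ω and v ≠ w, then f(v) > f(w). -/
/-!
Convexity puts `f` above its tangent plane at `w`, so `f v - f w ≥ ⟪∇f w, v - w⟫ =
‖∇f w‖ - ⟪∇f w, w⟫`, and this is positive by the equality case of Cauchy–Schwarz: the unit
vector `w` is not the direction `v` of `∇f w`.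
-/

open scoped InnerProductSpace

theorem ConvexOn.apply_sub_le_sub_of_hasFDerivAt {E : Type*} [NormedAddCommGroup E]
    [NormedSpace ℝ E] {s : Set E} {f : E → ℝ} {f' : E →L[ℝ] ℝ} {x y : E}
    (hf : ConvexOn ℝ s f) (hx : x ∈ s) (hy : y ∈ s) (hf' : HasFDerivAt f f' x) :
    f' (y - x) ≤ f y - f x := by
  set γ := AffineMap.lineMap (k := ℝ) x y
  have hγ : ConvexOn ℝ (γ ⁻¹' s) (f ∘ γ) := hf.comp_affineMap γ
  have h0 : (0 : ℝ) ∈ γ ⁻¹' s := by simpa [γ] using hx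
  have h1 : (1 : ℝ) ∈ γ ⁻¹' s := by simpa [γ] using hy
  have hderiv : HasDerivAt (f ∘ γ) (f' (y - x)) 0 := by
    rw [← AffineMap.lineMap_apply_zero (k := ℝ) x y] at hf'
    exact hf'.comp_hasDerivAt 0 AffineMap.hasDerivAt_lineMap
  simpa [slope_def_field, γ] using hγ.le_slope_of_hasDerivAt h0 h1 zero_lt_one hderiv

theorem real_inner_inv_norm_smul_sub_pos {F : Type*} [NormedAddCommGroup F]
    [InnerProductSpace ℝ F] {g w : F} (hg : g ≠ 0) (hw : ‖w‖ = 1) (hne : ‖g‖⁻¹ • g ≠ w) :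
    0 < ⟪g, ‖g‖⁻¹ • g - w⟫_ℝ := by
  have hgn : ‖g‖ ≠ 0 := norm_ne_zero_iff.mpr hg
  have hinner_dir : ⟪g, ‖g‖⁻¹ • g⟫_ℝ = ‖g‖ := by
    rw [real_inner_smul_right, real_inner_self_eq_norm_mul_norm]
    field_simp
  have hinner_w : ⟪g, w⟫_ℝ < ‖g‖ := by
    have : ⟪g, w⟫_ℝ < ‖g‖ * ‖w‖ := by
      rw [inner_lt_norm_mul_iff_real, hw, one_smul]
      intro hgw
      exact hne (by rw [hgw, smul_smul, ← hgw, inv_mul_cancel₀ hgn, one_smul])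
    rwa [hw, mul_one] at this
  rw [inner_sub_right, hinner_dir]
  linarith

/-- Kofidis–Regalia ascent lemma: if `f` is convex and `C¹` on an open
neighborhood `Ω` of a unit vector `w` with `∇f(w) ≠ 0`, and
`v = ∇f(w)/‖∇f(w)‖` lies in `Ω` with `v ≠ w`, then `f(v) > f(w)`. -/
theorem stmt_8 {n : ℕ} (f : EuclideanSpace ℝ (Fin n) → ℝ)
    (Ω : Set (EuclideanSpace ℝ (Fin n))) (hΩ : IsOpen Ω)
    (w : EuclideanSpace ℝ (Fin n)) (hw : w ∈ Ω) (hwnorm : ‖w‖ = 1)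
    (hconv : ConvexOn ℝ Ω f) (hdiff : ContDiffOn ℝ 1 f Ω)
    (hg : gradient f w ≠ 0)
    (v : EuclideanSpace ℝ (Fin n)) (hv : v = ‖gradient f w‖⁻¹ • gradient f w)
    (hvΩ : v ∈ Ω) (hvw : v ≠ w) :
    f w < f v := by
  have hgrad : HasGradientAt f (gradient f w) w :=
    ((hdiff.differentiableOn one_ne_zero).differentiableAt (hΩ.mem_nhds hw)).hasGradientAt
  have htangent : ⟪gradient f w, v - w⟫_ℝ ≤ f v - f w := by
    simpa using hconv.apply_sub_le_sub_of_hasFDerivAt hw hvΩ hgrad.hasFDerivAt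
  have hascent : 0 < ⟪gradient f w, v - w⟫_ℝ := by
    subst hv
    exact real_inner_inv_norm_smul_sub_pos hg hwnorm hvw
  linarith
end

section
/- Let f be continuously differentiable and concave on an open neighborhood Ω of a point w on the unit sphere, with ∇f(w) ≠ 0. Define v = −∇f(w)/‖∇f(w)‖. If v ∈ Ω and v ≠ w, then f(v) < f(w). -/
/-!
A concave function lies below its tangent hyperplanes, so
`f v ≤ f w + ⟪∇f(w), v - w⟫`. On the unit sphere the linear functional `⟪∇f(w), ·⟫` is
minimised exactly at `v = -∇f(w)/‖∇f(w)‖` (equality case of Cauchy–Schwarz), where it takes the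
value `-‖∇f(w)‖`; since `w ≠ v` is another unit vector, `⟪∇f(w), v - w⟫ < 0`.
-/

open InnerProductSpace Set

theorem ConcaveOn.le_add_of_hasFDerivAt {E : Type*} [NormedAddCommGroup E] [NormedSpace ℝ E]
    {s : Set E} {f : E → ℝ} {f' : E →L[ℝ] ℝ} {x y : E} (hf : ConcaveOn ℝ s f)
    (hx : x ∈ s) (hy : y ∈ s) (hf' : HasFDerivAt f f' x) :
    f y ≤ f x + f' (y - x) := by
  let ℓ : ℝ →ᵃ[ℝ] E := AffineMap.lineMap x y
  have hseg : Icc (0 : ℝ) 1 ⊆ ℓ ⁻¹' s := fun t ht =>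
    hf.1.segment_subset hx hy (segment_eq_image_lineMap ℝ x y ▸ ⟨t, ht, rfl⟩)
  have hline : ConcaveOn ℝ (Icc (0 : ℝ) 1) (f ∘ ℓ) :=
    (hf.comp_affineMap ℓ).subset hseg (convex_Icc 0 1)
  have hderiv : HasDerivAt (f ∘ ℓ) (f' (y - x)) 0 := by
    have hf'0 : HasFDerivAt f f' (ℓ 0) := by simpa [ℓ] using hf'
    exact hf'0.comp_hasDerivAt 0 AffineMap.hasDerivAt_lineMap
  have hslope := hline.slope_le_of_hasDerivAt (left_mem_Icc.2 zero_le_one)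
    (right_mem_Icc.2 zero_le_one) one_pos hderiv
  simp only [slope_def_field, Function.comp_apply, ℓ, AffineMap.lineMap_apply_zero,
    AffineMap.lineMap_apply_one, sub_zero, div_one] at hslope
  linarith

theorem ConcaveOn.le_add_inner_of_hasGradientAt {E : Type*} [NormedAddCommGroup E]
    [InnerProductSpace ℝ E] [CompleteSpace E] {s : Set E} {f : E → ℝ} {g x y : E}
    (hf : ConcaveOn ℝ s f) (hx : x ∈ s) (hy : y ∈ s) (hg : HasGradientAt f g x) :
    f y ≤ f x + ⟪g, y - x⟫_ℝ :=
  hf.le_add_of_hasFDerivAt hx hy hg.hasFDerivAt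

theorem inner_sub_lt_zero_of_eq_neg_normalize {E : Type*} [NormedAddCommGroup E]
    [InnerProductSpace ℝ E] {g v w : E} (hg : g ≠ 0) (hv : v = -(‖g‖⁻¹ • g)) (hw : ‖w‖ = 1)
    (hvw : v ≠ w) : ⟪g, v - w⟫_ℝ < 0 := by
  have hgn : ‖g‖ ≠ 0 := norm_ne_zero_iff.2 hg
  have hgv : ⟪g, v⟫_ℝ = -‖g‖ := by
    rw [hv, inner_neg_right, inner_smul_right, real_inner_self_eq_norm_sq]
    field_simp
  have hgw : ⟪-g, w⟫_ℝ < ‖-g‖ * ‖w‖ := by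
    refine inner_lt_norm_mul_iff_real.2 fun h => hvw ?_
    rw [hw, one_smul, norm_neg] at h
    rw [hv, ← smul_neg, h, smul_smul, inv_mul_cancel₀ hgn, one_smul]
  rw [inner_neg_left, norm_neg, hw, mul_one] at hgw
  rw [inner_sub_right, hgv]
  linarith

/-- if `f` is concave and `C¹` on an open
neighborhood `Ω` of a unit vector `w` with `∇f(w) ≠ 0`, and
`v = -∇f(w)/‖∇f(w)‖` lies in `Ω` with `v ≠ w`, then `f(v) < f(w)`. -/
theorem stmt_9 {n : ℕ} (f : EuclideanSpace ℝ (Fin n) → ℝ)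
    (Ω : Set (EuclideanSpace ℝ (Fin n))) (hΩ : IsOpen Ω)
    (w : EuclideanSpace ℝ (Fin n)) (hw : w ∈ Ω) (hwnorm : ‖w‖ = 1)
    (hconc : ConcaveOn ℝ Ω f) (hdiff : ContDiffOn ℝ 1 f Ω)
    (hg : gradient f w ≠ 0)
    (v : EuclideanSpace ℝ (Fin n)) (hv : v = -(‖gradient f w‖⁻¹ • gradient f w))
    (hvΩ : v ∈ Ω) (hvw : v ≠ w) :
    f v < f w := by
  have hgrad : HasGradientAt f (gradient f w) w :=
    ((hdiff.contDiffAt (hΩ.mem_nhds hw)).differentiableAt one_ne_zero).hasGradientAt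
  have htangent := hconc.le_add_inner_of_hasGradientAt hw hvΩ hgrad
  have hdescent := inner_sub_lt_zero_of_eq_neg_normalize hg hv hwnorm hvw
  linarith
end
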